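/- Let H be a real inner product space with norms ‖·‖_c and ‖·‖ satisfying ‖w‖_c² ≥ (1/c_max)‖w‖² for all w, and let a be a symmetric nonnegative bilinear form satisfying the inverse inequality a(w,w) ≤ C_inv² H⁻² ‖w‖² on a subspace V_ms. Suppose the CFL condition 1/c_max − (1/4)C_inv² H⁻² (Δt)² ≥ δ holds with δ > 0. Then for any u, v ∈ V_ms, the discrete energy 𝓔 := ‖(u − v)/Δt‖_c² + (1/2)a(u, v) satisfies 𝓔 ≥ δ‖(u − v)/Δt‖² + (1/4)(a(u,u) + a(v,v)) ≥ 0. -/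

import Mathlib

/-!
Since `a` is symmetric, `a u v = ¼ (a u u + a v v) - ¼ a (u - v) (u - v)`, and
`a (u - v) (u - v) = Δt² a w w` for the discrete velocity `w = (u - v) / Δt`. The energy is thus
`c w w - ¼ Δt² a w w + ¼ (a u u + a v v)`, and the lower bound for `c` together with the
inverse inequality for `a` on `w ∈ V_ms` bounds the first two terms below by
`(1 / c_max - ¼ C_inv² H⁻² Δt²) ‖w‖² ≥ δ ‖w‖²`.
-/

namespace LinearMap.BilinForm

variable {R M : Type*} [CommRing R] [AddCommGroup M] [Module R M]

theorem apply_sub_sub_of_symm (a : LinearMap.BilinForm R M) (ha : ∀ x y, a x y = a y x)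
    (u v : M) :
    a (u - v) (u - v) = a u u - 2 * a u v + a v v := by
  simp only [map_sub, LinearMap.sub_apply]
  rw [ha v u]
  ring

theorem apply_smul_smul (a : LinearMap.BilinForm R M) (t : R) (w : M) :
    a (t • w) (t • w) = t ^ 2 * a w w := by
  simp only [map_smul, LinearMap.smul_apply, smul_eq_mul]
  ring

end LinearMap.BilinForm

theorem le_sub_of_cfl {E : Type*} [SeminormedAddCommGroup E] (c a : E → E → ℝ) {w : E}
    {m K τ δ : ℝ} (hc : m * ‖w‖ ^ 2 ≤ c w w) (ha : a w w ≤ K * ‖w‖ ^ 2)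
    (hcfl : δ ≤ m - 1 / 4 * K * τ ^ 2) :
    δ * ‖w‖ ^ 2 ≤ c w w - 1 / 4 * τ ^ 2 * a w w := by
  nlinarith [mul_le_mul_of_nonneg_left ha (sq_nonneg τ), sq_nonneg ‖w‖]

theorem stmt_12_general {H : Type*} [NormedAddCommGroup H] [InnerProductSpace ℝ H]
    (c a : H →ₗ[ℝ] H →ₗ[ℝ] ℝ)
    (hasymm : ∀ x y : H, a x y = a y x)
    (hannn : ∀ w : H, 0 ≤ a w w)
    (cmax Cinv Hm Δt δ : ℝ)
    (hΔt : 0 < Δt)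
    (hδ : 0 < δ)
    (hc : ∀ w : H, (1 / cmax) * ‖w‖ ^ 2 ≤ c w w)
    (Vms : Submodule ℝ H)
    (hinv : ∀ w ∈ Vms, a w w ≤ Cinv ^ 2 * (1 / Hm ^ 2) * ‖w‖ ^ 2)
    (hCFL : 1 / cmax - (1 / 4) * Cinv ^ 2 * (1 / Hm ^ 2) * Δt ^ 2 ≥ δ)
    (u v : H) (hu : u ∈ Vms) (hv : v ∈ Vms) :
    c (Δt⁻¹ • (u - v)) (Δt⁻¹ • (u - v)) + (1 / 2) * a u v ≥
      δ * ‖Δt⁻¹ • (u - v)‖ ^ 2 + (1 / 4) * (a u u + a v v) ∧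
    δ * ‖Δt⁻¹ • (u - v)‖ ^ 2 + (1 / 4) * (a u u + a v v) ≥ 0 := by
  set w : H := Δt⁻¹ • (u - v)
  have hdiff : a (u - v) (u - v) = Δt ^ 2 * a w w := by
    rw [LinearMap.BilinForm.apply_smul_smul, ← mul_assoc, ← mul_pow,
      mul_inv_cancel₀ hΔt.ne', one_pow, one_mul]
  have hpolar := LinearMap.BilinForm.apply_sub_sub_of_symm a hasymm u v
  have hcoercive : δ * ‖w‖ ^ 2 ≤ c w w - 1 / 4 * Δt ^ 2 * a w w :=
    le_sub_of_cfl (c · ·) (a · ·) (hc w) (hinv w (Vms.smul_mem _ (Vms.sub_mem hu hv)))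
      (by linarith)
  refine ⟨by linarith, ?_⟩
  exact add_nonneg (mul_nonneg hδ.le (sq_nonneg _))
    (mul_nonneg (by norm_num) (add_nonneg (hannn u) (hannn v)))

/-- positivity of the discrete energy under the CFL condition. -/
theorem stmt_12 {H : Type*} [NormedAddCommGroup H] [InnerProductSpace ℝ H]
    (c a : H →ₗ[ℝ] H →ₗ[ℝ] ℝ)
    (hcsymm : ∀ x y : H, c x y = c y x) (hasymm : ∀ x y : H, a x y = a y x)
    (hannn : ∀ w : H, 0 ≤ a w w)
    (cmax Cinv Hm Δt δ : ℝ)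
    (hcmax : 0 < cmax) (hCinv : 0 < Cinv) (hHm : 0 < Hm) (hΔt : 0 < Δt)
    (hδ : 0 < δ)
    (hc : ∀ w : H, (1 / cmax) * ‖w‖ ^ 2 ≤ c w w)
    (Vms : Submodule ℝ H)
    (hinv : ∀ w ∈ Vms, a w w ≤ Cinv ^ 2 * (1 / Hm ^ 2) * ‖w‖ ^ 2)
    (hCFL : 1 / cmax - (1 / 4) * Cinv ^ 2 * (1 / Hm ^ 2) * Δt ^ 2 ≥ δ)
    (u v : H) (hu : u ∈ Vms) (hv : v ∈ Vms) :
    c (Δt⁻¹ • (u - v)) (Δt⁻¹ • (u - v)) + (1 / 2) * a u v ≥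
      δ * ‖Δt⁻¹ • (u - v)‖ ^ 2 + (1 / 4) * (a u u + a v v) ∧
    δ * ‖Δt⁻¹ • (u - v)‖ ^ 2 + (1 / 4) * (a u u + a v v) ≥ 0 :=
  stmt_12_general c a hasymm hannn cmax Cinv Hm Δt δ hΔt hδ hc Vms hinv hCFL u v hu hv
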